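/- arXiv:2412.03099 — 7 statements merged into one kernel-verified Lean document; each statement's English description precedes it below -/
import Mathlib

section
/- Let Q(x) be analytic near 0 and let A(x) = [[a11, a12],[a21, a22]] be a traceless 2×2 matrix of germs of analytic functions with a12(0) ≠ 0. Then the gauge transformation y' = (1/√a12)·[[1, 0],[a11 − (1/2)x^{k+1}(d/dx)log a12, a12]]·y transforms the system x^{k+1} y' = A(x) y into the companion system x^{k+1} dy'/dx = [[0,1],[Q(x),0]] y', where Q(x) = −det A(x) + x^{k+1}(da11/dx) − a11·x^{k+1}(d/dx)log a12 − (1/2)(x^{k+1}d/dx)² log a12 + (1/4)(x^{k+1}(d/dx)log a12)². -/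
/-!
Write `θ = x^{k+1} d/dx`. Since `s² = a12`, `θs = (L/2)·s`, so the quotient rule gives
`θ(y1/s) = (θy1 - (L/2)·y1)/s`, which is `z2` by the first equation of the system.
Because `a12/s = s`, also `z2 = (a11 - L/2)·z1 + s·y2`; applying `θ` to this and substituting
`θz1 = z2`, `θs = (L/2)·s`, the second equation of the system and `y1 = s·z1`, the terms in
`z2` and `y2` cancel and `Q·z1` remains.
-/

open Filter Topology

theorem logDeriv_eq_two_mul_logDeriv_of_sq_eventuallyEq {𝕜 : Type*}
    [NontriviallyNormedField 𝕜] {s a : 𝕜 → 𝕜} {x : 𝕜} (hsa : (fun t => s t ^ 2) =ᶠ[𝓝 x] a)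
    (hs : DifferentiableAt 𝕜 s x) :
    logDeriv a x = 2 * logDeriv s x := by
  rw [← (logDeriv_congr_nhds hsa).eq_of_nhds, logDeriv_fun_pow hs]
  norm_num

theorem mul_deriv_div_eq_of_mul_deriv_eq {𝕜 : Type*} [NontriviallyNormedField 𝕜]
    {y s : 𝕜 → 𝕜} {x w ℓ : 𝕜} (hy : DifferentiableAt 𝕜 y x) (hs : DifferentiableAt 𝕜 s x)
    (hs0 : s x ≠ 0) (hsℓ : w * deriv s x = ℓ * s x) :
    w * deriv (fun t => y t / s t) x = (w * deriv y x - ℓ * y x) / s x := by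
  rw [(hy.hasDerivAt.fun_div hs.hasDerivAt hs0).deriv]
  field_simp
  linear_combination (-y x) * hsℓ

theorem stmt_0_general (k : ℕ) (U : Set ℂ) (hU : IsOpen U)
    (a11 a12 a21 y1 y2 s : ℂ → ℂ)
    (ha12 : ∀ x ∈ U, a12 x ≠ 0)
    (hs : ∀ x ∈ U, (s x) ^ 2 = a12 x)
    (hsd : ∀ x ∈ U, DifferentiableAt ℂ s x)
    (hd11 : ∀ x ∈ U, DifferentiableAt ℂ a11 x)
    (hd12 : ∀ x ∈ U, DifferentiableAt ℂ a12 x)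
    (hd12' : ∀ x ∈ U, DifferentiableAt ℂ (deriv a12) x)
    (hy1 : ∀ x ∈ U, DifferentiableAt ℂ y1 x)
    (hy2 : ∀ x ∈ U, DifferentiableAt ℂ y2 x)
    -- the original system `x^{k+1} y' = A y` with `A` traceless, i.e. `a22 = -a11`
    (hsys1 : ∀ x ∈ U, x ^ (k+1) * deriv y1 x = a11 x * y1 x + a12 x * y2 x)
    (hsys2 : ∀ x ∈ U, x ^ (k+1) * deriv y2 x = a21 x * y1 x - a11 x * y2 x)
    -- `L = x^{k+1} (d/dx) log a12`
    (L : ℂ → ℂ) (hL : ∀ x, L x = x ^ (k+1) * deriv a12 x / a12 x)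
    -- `Q = -det A + x^{k+1} a11' - a11 L - (1/2) x^{k+1} L' + (1/4) L²`,
    -- where `-det A = a11² + a12·a21` since `A` is traceless
    (Q : ℂ → ℂ)
    (hQ : ∀ x, Q x = (a11 x ^ 2 + a12 x * a21 x) + x ^ (k+1) * deriv a11 x
      - a11 x * L x - (1/2) * (x ^ (k+1) * deriv L x) + (1/4) * (L x) ^ 2)
    -- the gauge transformation `z = (1/√a12)·[[1,0],[a11 - (1/2)L, a12]]·y`
    (z1 z2 : ℂ → ℂ)
    (hz1 : ∀ x, z1 x = y1 x / s x)
    (hz2 : ∀ x, z2 x = ((a11 x - (1/2) * L x) * y1 x + a12 x * y2 x) / s x) :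
    ∀ x ∈ U, x ^ (k+1) * deriv z1 x = z2 x ∧ x ^ (k+1) * deriv z2 x = Q x * z1 x := by
  have hs0 : ∀ x ∈ U, s x ≠ 0 := fun x hx h => ha12 x hx (by rw [← hs x hx, h, zero_pow two_ne_zero])
  intro x hx
  have hUx : ∀ᶠ t in 𝓝 x, t ∈ U := hU.mem_nhds hx
  have hsL : x ^ (k+1) * deriv s x = L x / 2 * s x := by
    have hlog := logDeriv_eq_two_mul_logDeriv_of_sq_eventuallyEq (hUx.mono hs) (hsd x hx)
    rw [hL x, mul_div_assoc, ← logDeriv_apply, hlog, logDeriv_apply]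
    field_simp [hs0 x hx]
  have hLd : DifferentiableAt ℂ L x := by
    rw [funext hL]
    exact ((differentiableAt_pow (k+1)).mul (hd12' x hx)).div (hd12 x hx) (ha12 x hx)
  have hz1d : DifferentiableAt ℂ z1 x := by
    rw [funext hz1]
    exact (hy1 x hx).div (hsd x hx) (hs0 x hx)
  have row1 : x ^ (k+1) * deriv z1 x = z2 x := by
    rw [funext hz1, mul_deriv_div_eq_of_mul_deriv_eq (hy1 x hx) (hsd x hx) (hs0 x hx) hsL,
      hsys1 x hx, hz2 x]
    ring
  have hz2_eq : z2 =ᶠ[𝓝 x] fun t => (a11 t - 1/2 * L t) * z1 t + s t * y2 t := by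
    filter_upwards [hUx] with t ht
    rw [hz2 t, hz1 t, ← hs t ht]
    field_simp [hs0 t ht]
  have hz2d : HasDerivAt (fun t => (a11 t - 1/2 * L t) * z1 t + s t * y2 t)
      ((deriv a11 x - 1/2 * deriv L x) * z1 x + (a11 x - 1/2 * L x) * deriv z1 x
        + (deriv s x * y2 x + s x * deriv y2 x)) x :=
    (((hd11 x hx).hasDerivAt.sub (hLd.hasDerivAt.const_mul (1/2))).mul hz1d.hasDerivAt).add
      ((hsd x hx).hasDerivAt.mul (hy2 x hx).hasDerivAt)
  have hy1z1 : y1 x = s x * z1 x := by rw [hz1 x]; field_simp [hs0 x hx]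
  refine ⟨row1, ?_⟩
  rw [hz2_eq.deriv_eq, hz2d.deriv]
  linear_combination (a11 x - L x / 2) * row1 + (a11 x - L x / 2) * hz2_eq.eq_of_nhds
    + y2 x * hsL + s x * hsys2 x hx + s x * a21 x * hy1z1 + a21 x * z1 x * hs x hx - z1 x * hQ x

/-- The explicit gauge transformation bringing a traceless 2×2 system
`x^{k+1} y' = A(x) y` (with `a12(0) ≠ 0`, here `a12 ≠ 0` on the domain `U`) to the
companion form `x^{k+1} z' = [[0,1],[Q,0]] z`, with `Q` given by the stated formula. -/
theorem stmt_0 (k : ℕ) (U : Set ℂ) (hU : IsOpen U)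
    (a11 a12 a21 y1 y2 s : ℂ → ℂ)
    (ha12 : ∀ x ∈ U, a12 x ≠ 0)
    (hs : ∀ x ∈ U, (s x) ^ 2 = a12 x)
    (hsd : ∀ x ∈ U, DifferentiableAt ℂ s x)
    (hd11 : ∀ x ∈ U, DifferentiableAt ℂ a11 x)
    (hd12 : ∀ x ∈ U, DifferentiableAt ℂ a12 x)
    (hd12' : ∀ x ∈ U, DifferentiableAt ℂ (deriv a12) x)
    (hd21 : ∀ x ∈ U, DifferentiableAt ℂ a21 x)
    (hy1 : ∀ x ∈ U, DifferentiableAt ℂ y1 x)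
    (hy2 : ∀ x ∈ U, DifferentiableAt ℂ y2 x)
    -- the original system `x^{k+1} y' = A y` with `A` traceless, i.e. `a22 = -a11`
    (hsys1 : ∀ x ∈ U, x ^ (k+1) * deriv y1 x = a11 x * y1 x + a12 x * y2 x)
    (hsys2 : ∀ x ∈ U, x ^ (k+1) * deriv y2 x = a21 x * y1 x - a11 x * y2 x)
    -- `L = x^{k+1} (d/dx) log a12`
    (L : ℂ → ℂ) (hL : ∀ x, L x = x ^ (k+1) * deriv a12 x / a12 x)
    -- `Q = -det A + x^{k+1} a11' - a11 L - (1/2) x^{k+1} L' + (1/4) L²`,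
    -- where `-det A = a11² + a12·a21` since `A` is traceless
    (Q : ℂ → ℂ)
    (hQ : ∀ x, Q x = (a11 x ^ 2 + a12 x * a21 x) + x ^ (k+1) * deriv a11 x
      - a11 x * L x - (1/2) * (x ^ (k+1) * deriv L x) + (1/4) * (L x) ^ 2)
    -- the gauge transformation `z = (1/√a12)·[[1,0],[a11 - (1/2)L, a12]]·y`
    (z1 z2 : ℂ → ℂ)
    (hz1 : ∀ x, z1 x = y1 x / s x)
    (hz2 : ∀ x, z2 x = ((a11 x - (1/2) * L x) * y1 x + a12 x * y2 x) / s x) :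
    ∀ x ∈ U, x ^ (k+1) * deriv z1 x = z2 x ∧ x ^ (k+1) * deriv z2 x = Q x * z1 x :=
  stmt_0_general k U hU a11 a12 a21 y1 y2 s ha12 hs hsd hd11 hd12 hd12' hy1 hy2 hsys1 hsys2 L hL Q
    hQ z1 z2 hz1 hz2
end

section
/- Every system x^{k+1} dy/dx = A(x)y with A(x) an analytic traceless 2×2 matrix germ satisfying A(0) ≠ 0 is analytically gauge equivalent to a companion system x^{k+1} dy/dx = [[0,1],[Q(x),0]] y for some analytic germ Q(x). -/
open Matrix Filter Topology

/-! After a constant conjugation the `(1,2)`-entry `b` of `A = [[a, b], [c, -a]]` does not vanish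
at `0`. Take an analytic `β` with `β² b = 1` and `T` with first row `(β, 0)`. The first row of the
gauge equation `x^{k+1} T' = [[0, 1], [Q, 0]] T - T A` forces the second row to be
`(x^{k+1} β' + β a, β b)`; the `(2,2)`-entry of the equation is then `x^{k+1} (β² b)' = 0`, the
`(2,1)`-entry defines `Q`, and `det T = β² b = 1`. -/

lemma AnalyticAt.exists_pow_eq {b : ℂ → ℂ} {z : ℂ} (hb : AnalyticAt ℂ b z) (hbz : b z ≠ 0)
    {n : ℕ} (hn : n ≠ 0) : ∃ β : ℂ → ℂ, AnalyticAt ℂ β z ∧ ∀ᶠ x in 𝓝 z, β x ^ n = b x := by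
  obtain ⟨c, hc⟩ := IsAlgClosed.exists_pow_nat_eq (b z) (Nat.pos_of_ne_zero hn)
  have hlog : AnalyticAt ℂ (fun x => Complex.log (b x / b z)) z := by
    refine (analyticAt_clog ?_).comp (hb.div analyticAt_const hbz)
    simp [div_self hbz, Complex.one_mem_slitPlane]
  refine ⟨fun x => c * Complex.exp (Complex.log (b x / b z) / n),
    analyticAt_const.mul (analyticAt_cexp.comp (hlog.div analyticAt_const (by simpa))), ?_⟩
  filter_upwards [hb.continuousAt.eventually_ne hbz] with x hx
  rw [mul_pow, ← Complex.exp_nat_mul, mul_div_cancel₀ _ (by simpa),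
    Complex.exp_log (div_ne_zero hx hbz), hc, mul_div_cancel₀ _ hbz]

section EntrywiseCalculus

variable {𝕜 : Type*} [NontriviallyNormedField 𝕜] {n : Type*} [Fintype n]

lemma analyticAt_mul_apply {E : Type*} [NormedAddCommGroup E] [NormedSpace 𝕜 E]
    {M N : E → Matrix n n 𝕜} {z : E} (hM : ∀ i j, AnalyticAt 𝕜 (fun x => M x i j) z)
    (hN : ∀ i j, AnalyticAt 𝕜 (fun x => N x i j) z) (i j : n) :
    AnalyticAt 𝕜 (fun x => (M x * N x) i j) z := by
  simp only [mul_apply]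
  exact Finset.analyticAt_fun_sum _ fun l _ => (hM i l).mul (hN l j)

lemma deriv_mul_const_apply {T : 𝕜 → Matrix n n 𝕜} {x : 𝕜}
    (hT : ∀ i j, DifferentiableAt 𝕜 (fun t => T t i j) x) (C : Matrix n n 𝕜) (i j : n) :
    deriv (fun t => (T t * C) i j) x = ∑ l, deriv (fun t => T t i l) x * C l j := by
  simp only [mul_apply]
  rw [deriv_fun_sum fun l _ => (hT i l).mul_const _]
  exact Finset.sum_congr rfl fun l _ => deriv_mul_const (hT i l) _

end EntrywiseCalculus

section Gauge

variable {n : Type*} [Fintype n] [DecidableEq n]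

/-- `T` is an analytic gauge transformation, invertible at `0`, taking solutions `y` of
`x^{k+1} y' = A y` to solutions `T y` of `x^{k+1} z' = B z`. -/
def IsAnalyticGauge (k : ℕ) (A B T : ℂ → Matrix n n ℂ) : Prop :=
  (∀ i j, AnalyticAt ℂ (fun x => T x i j) 0) ∧ (T 0).det ≠ 0 ∧
    ∀ᶠ x in 𝓝 0, (of fun i j => x ^ (k + 1) * deriv (fun t => T t i j) x) = B x * T x - T x * A x

lemma IsAnalyticGauge.mul_units {k : ℕ} {A B T : ℂ → Matrix n n ℂ} (P : (Matrix n n ℂ)ˣ)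
    (h : IsAnalyticGauge k (fun x => (P : Matrix n n ℂ) * A x * (↑P⁻¹ : Matrix n n ℂ)) B T) :
    IsAnalyticGauge k A B (fun x => T x * (P : Matrix n n ℂ)) := by
  obtain ⟨hT, hdet, heq⟩ := h
  refine ⟨analyticAt_mul_apply hT fun _ _ => analyticAt_const, ?_, ?_⟩
  · rw [det_mul]
    exact mul_ne_zero hdet (isUnits_det_units P).ne_zero
  filter_upwards [heq, eventually_all.2 fun i => eventually_all.2 fun j =>
    (hT i j).eventually_analyticAt] with x hx hTx
  have hmul : (of fun i j => x ^ (k + 1) * deriv (fun t => (T t * (P : Matrix n n ℂ)) i j) x)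
      = (of fun i j => x ^ (k + 1) * deriv (fun t => T t i j) x) * (P : Matrix n n ℂ) := by
    ext i j
    rw [of_apply, deriv_mul_const_apply (fun i j => (hTx i j).differentiableAt), mul_apply,
      Finset.mul_sum]
    simp only [of_apply, mul_assoc]
  rw [hmul, hx, sub_mul]
  simp only [mul_assoc, Units.inv_mul, mul_one]

end Gauge

lemma companion_gauge_identity {R : Type*} [CommRing R] {s a b c β β' b' u u' : R}
    (hu : u = s * β' + β * a) (hβ : β ^ 2 * b = 1) (hβ' : β * (2 * β' * b + β * b') = 0) :
    !![s * β', 0; s * u', s * (β' * b + β * b')]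
      = !![0, 1; (s * u' + u * a + β * b * c) * (β * b), 0] * !![β, 0; u, β * b]
        - !![β, 0; u, β * b] * !![a, b; c, -a] := by
  ext i j
  fin_cases i <;> fin_cases j
  all_goals simp
  · linear_combination -hu
  · linear_combination -(s * u' + u * a + β * b * c) * hβ
  · linear_combination b * hu + s * β * b * hβ' - s * (2 * β' * b + β * b') * hβ

lemma Matrix.eta_fin_two_of_trace_eq_zero {R : Type*} [AddCommGroup R]
    {M : Matrix (Fin 2) (Fin 2) R} (htr : M.trace = 0) : M = !![M 0 0, M 0 1; M 1 0, -M 0 0] := by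
  rw [trace_fin_two, add_eq_zero_iff_eq_neg'] at htr
  rw [← htr]
  exact eta_fin_two M

lemma exists_companion_gauge_of_apply_zero_one_ne_zero (k : ℕ) {A : ℂ → Matrix (Fin 2) (Fin 2) ℂ}
    (hA : ∀ i j, AnalyticAt ℂ (fun x => A x i j) 0) (htr : ∀ x, (A x).trace = 0)
    (hb : A 0 0 1 ≠ 0) :
    ∃ Q : ℂ → ℂ, AnalyticAt ℂ Q 0 ∧ ∃ T, IsAnalyticGauge k A (fun x => !![0, 1; Q x, 0]) T := by
  obtain ⟨β, hβ, hβ_sq⟩ := ((hA 0 1).inv hb).exists_pow_eq (inv_ne_zero hb) two_ne_zero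
  have hβb : ∀ᶠ x in 𝓝 0, β x ^ 2 * A x 0 1 = 1 := by
    filter_upwards [hβ_sq, (hA 0 1).continuousAt.eventually_ne hb] with x hsq hne
    rw [hsq, Pi.inv_apply, inv_mul_cancel₀ hne]
  set u := fun x => x ^ (k + 1) * deriv β x + β x * A x 0 0
  have hu : AnalyticAt ℂ u 0 := ((analyticAt_id.pow _).mul hβ.deriv).add (hβ.mul (hA 0 0))
  refine ⟨fun x => (x ^ (k + 1) * deriv u x + u x * A x 0 0 + β x * A x 0 1 * A x 1 0)
      * (β x * A x 0 1), ?_, fun x => !![β x, 0; u x, β x * A x 0 1], ?_, ?_, ?_⟩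
  · exact ((((analyticAt_id.pow _).mul hu.deriv).add (hu.mul (hA 0 0))).add
      ((hβ.mul (hA 0 1)).mul (hA 1 0))).mul (hβ.mul (hA 0 1))
  · intro i j
    fin_cases i <;> fin_cases j
    exacts [hβ, analyticAt_const, hu, hβ.mul (hA 0 1)]
  · rw [det_fin_two_of, zero_mul, sub_zero, ← mul_assoc, ← sq, hβb.self_of_nhds]
    exact one_ne_zero
  filter_upwards [hβb, eventually_eventually_nhds.2 hβb, hβ.eventually_analyticAt,
    (hA 0 1).eventually_analyticAt] with x hβbx hβb_nhds hβx hbx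
  have hderiv : β x * (2 * deriv β x * A x 0 1 + β x * deriv (fun t => A t 0 1) x) = 0 := by
    have h := (hβx.differentiableAt.hasDerivAt.pow 2).mul hbx.differentiableAt.hasDerivAt
    have h0 := h.unique ((hasDerivAt_const x (1 : ℂ)).congr_of_eventuallyEq hβb_nhds)
    simp only [Pi.pow_apply, Nat.cast_ofNat] at h0
    linear_combination h0
  have hT' : (of fun i j => x ^ (k + 1) * deriv (fun t => !![β t, 0; u t, β t * A t 0 1] i j) x)
      = !![x ^ (k + 1) * deriv β x, 0; x ^ (k + 1) * deriv u x,
          x ^ (k + 1) * (deriv β x * A x 0 1 + β x * deriv (fun t => A t 0 1) x)] := by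
    ext i j
    fin_cases i <;> fin_cases j
    all_goals simp [deriv_fun_mul hβx.differentiableAt hbx.differentiableAt]
  rw [hT', Matrix.eta_fin_two_of_trace_eq_zero (htr x)]
  exact companion_gauge_identity rfl hβbx hderiv

lemma Matrix.exists_units_conj_apply_zero_one_ne_zero {K : Type*} [Field K] [NeZero (2 : K)]
    {M : Matrix (Fin 2) (Fin 2) K} (htr : M.trace = 0) (hM : M ≠ 0) :
    ∃ P : (Matrix (Fin 2) (Fin 2) K)ˣ,
      ((P : Matrix (Fin 2) (Fin 2) K) * M * (↑P⁻¹ : Matrix (Fin 2) (Fin 2) K)) 0 1 ≠ 0 := by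
  rw [Matrix.eta_fin_two_of_trace_eq_zero htr] at hM ⊢
  generalize M 0 0 = a, M 0 1 = b, M 1 0 = c at hM ⊢
  obtain hb | rfl := ne_or_eq b 0
  · exact ⟨1, by simpa using hb⟩
  obtain hc | rfl := ne_or_eq c 0
  · refine ⟨⟨!![0, 1; 1, 0], !![0, 1; 1, 0], ?_, ?_⟩, ?_⟩ <;> simp [one_fin_two, hc]
  have ha : a ≠ 0 := by
    rintro rfl
    exact hM (by simpa using (eta_fin_two (0 : Matrix (Fin 2) (Fin 2) K)).symm)
  -- the shear `[[1, 1], [0, 1]]` turns `diag(a, -a)` into a matrix with corner `-2a`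
  refine ⟨⟨!![1, 1; 0, 1], !![1, -1; 0, 1], by simp [one_fin_two], by simp [one_fin_two]⟩, ?_⟩
  simpa [← two_mul, two_ne_zero] using ha

/-- every traceless analytic system `x^{k+1} y' = A(x) y` with `A(0) ≠ 0`
is analytically gauge equivalent to a companion system
`x^{k+1} y' = [[0,1],[Q(x),0]] y`, i.e. there is an analytic `T` with `det T(0) ≠ 0`
satisfying the gauge transformation equation `x^{k+1} T' = [[0,1],[Q,0]]·T - T·A`
near `0`. -/
theorem stmt_1 (k : ℕ) (A : ℂ → Matrix (Fin 2) (Fin 2) ℂ)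
    (hA : ∀ i j, AnalyticAt ℂ (fun x => A x i j) 0)
    (htr : ∀ x, (A x).trace = 0)
    (hA0 : A 0 ≠ 0) :
    ∃ (T : ℂ → Matrix (Fin 2) (Fin 2) ℂ) (Q : ℂ → ℂ),
      (∀ i j, AnalyticAt ℂ (fun x => T x i j) 0) ∧
      AnalyticAt ℂ Q 0 ∧
      (T 0).det ≠ 0 ∧
      ∀ᶠ x in nhds (0:ℂ),
        (Matrix.of fun i j => x ^ (k+1) * deriv (fun t => T t i j) x)
          = !![(0:ℂ), 1; Q x, 0] * T x - T x * A x := by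
  obtain ⟨P, hP⟩ := exists_units_conj_apply_zero_one_ne_zero (htr 0) hA0
  have hPA : ∀ i j, AnalyticAt ℂ
      (fun x => ((P : Matrix (Fin 2) (Fin 2) ℂ) * A x * (↑P⁻¹ : Matrix (Fin 2) (Fin 2) ℂ)) i j) 0 :=
    analyticAt_mul_apply (analyticAt_mul_apply (fun _ _ => analyticAt_const) hA)
      fun _ _ => analyticAt_const
  obtain ⟨Q, hQ, T, hT⟩ := exists_companion_gauge_of_apply_zero_one_ne_zero k hPA
    (fun x => (trace_units_conj P (A x)).trans (htr x)) hP
  obtain ⟨hT_an, hT_det, hT_eq⟩ := hT.mul_units P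
  exact ⟨_, Q, hT_an, hQ, hT_det, hT_eq⟩
end

section
/- With notation of the previous decomposition (a,b,c,d for a gauge transformation between companion systems with Q, Q'), one has d = −(1/2)x^{k+1}b', c = (1/2)(Q'−Q)b − (1/2)(x^{k+1}d/dx)²b, and the remaining equations reduce to: x^{k+1}a' = (1/2)(Q'−Q)b and (Q'+Q)x^{k+1}b' + (1/2)b·x^{k+1}(Q'+Q)' − (1/2)(x^{k+1}d/dx)³b = (Q'−Q)a. -/
/-!
All four equations only involve `x^{k+1} d/dx` through its being a derivation, so the reduction
holds for an arbitrary derivation `D` of a commutative ring in which `2` is invertible. The first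
equation gives `d`; adding the second and third gives `D a`, and then `c = D a + D d`; substituting
`c` and `d` into the fourth and expanding by the Leibniz rule leaves the last equation.
-/

/-- The operator `x^{k+1}·d/dx` on formal power series. -/
noncomputable def Dop (k : ℕ) (f : PowerSeries ℂ) : PowerSeries ℂ :=
  PowerSeries.X ^ (k+1) * f.derivativeFun

open PowerSeries

namespace Derivation

variable {R A : Type*} [CommSemiring R] [CommRing A] [Algebra R A] (D : Derivation R A A)

theorem map_eq_zero_of_mul_two_eq_one {half : A} (hhalf : half * 2 = 1) : D half = 0 := by
  have h2 : D 2 = 0 := by exact_mod_cast D.map_natCast 2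
  have hD : 2 * D half = 0 := by
    simpa [hhalf, h2, smul_eq_mul] using (D.leibniz half 2).symm
  linear_combination half * hD - D half * hhalf

theorem map_mul_of_mul_two_eq_one {half : A} (hhalf : half * 2 = 1) (f : A) :
    D (half * f) = half * D f := by
  simp [D.leibniz, D.map_eq_zero_of_mul_two_eq_one hhalf]

theorem gauge_equations_reduce {half : A} (hhalf : half * 2 = 1) (Q Q' a b c d : A)
    (e1 : D b = -2 * d)
    (e2 : D (a + d) = c)
    (e3 : D (a - d) = -c + (Q' - Q) * b)
    (e4 : D (Q * b + c) = (Q' + Q) * d + (Q' - Q) * a) :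
    d = -half * D b ∧
    c = half * ((Q' - Q) * b) - half * D (D b) ∧
    D a = half * ((Q' - Q) * b) ∧
    (Q' + Q) * D b + half * (b * D (Q' + Q)) - half * D (D (D b)) = (Q' - Q) * a := by
  have hd : d = -half * D b := by linear_combination half * e1 - d * hhalf
  rw [map_add] at e2
  rw [map_sub] at e3
  have ha : D a = half * ((Q' - Q) * b) := by
    linear_combination half * (e2 + e3) - D a * hhalf
  have hDd : D d = -(half * D (D b)) := by
    rw [hd, neg_mul, map_neg, D.map_mul_of_mul_two_eq_one hhalf]
  have hc : c = half * ((Q' - Q) * b) - half * D (D b) := by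
    rw [← e2, ha, hDd]; ring
  refine ⟨hd, hc, ha, ?_⟩
  rw [hc, hd] at e4
  simp only [map_add, map_sub, D.leibniz, D.map_eq_zero_of_mul_two_eq_one hhalf, smul_eq_mul,
    mul_zero, add_zero] at e4 ⊢
  linear_combination e4 + (b * D Q - Q' * D b) * hhalf

end Derivation

noncomputable def dopDerivation (k : ℕ) : Derivation ℂ ℂ⟦X⟧ ℂ⟦X⟧ :=
  (X : ℂ⟦X⟧) ^ (k + 1) • derivative ℂ

theorem coe_dopDerivation (k : ℕ) : ⇑(dopDerivation k) = Dop k := rfl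

theorem C_half_mul_two {K : Type*} [Field K] [NeZero (2 : K)] :
    (C (1 / 2 : K) : K⟦X⟧) * 2 = 1 := by
  rw [← map_ofNat C 2, ← map_mul, one_div, inv_mul_cancel₀ two_ne_zero, map_one]

/-- from the four equations for `(a,b,c,d)` one gets
`d = −(1/2)x^{k+1}b'`, `c = (1/2)(Q'−Q)b − (1/2)(x^{k+1}d/dx)²b`, and the two
reduced equations. -/
theorem stmt_8 (k : ℕ) (Q Q' a b c d : PowerSeries ℂ)
    (e1 : Dop k b = -2 * d)
    (e2 : Dop k (a + d) = c)
    (e3 : Dop k (a - d) = -c + (Q' - Q) * b)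
    (e4 : Dop k (Q * b + c) = (Q' + Q) * d + (Q' - Q) * a) :
    d = -(PowerSeries.C (R := ℂ) (1/2)) * Dop k b ∧
    c = PowerSeries.C (R := ℂ) (1/2) * ((Q' - Q) * b)
        - PowerSeries.C (R := ℂ) (1/2) * Dop k (Dop k b) ∧
    Dop k a = PowerSeries.C (R := ℂ) (1/2) * ((Q' - Q) * b) ∧
    (Q' + Q) * Dop k b + PowerSeries.C (R := ℂ) (1/2) * (b * Dop k (Q' + Q))
        - PowerSeries.C (R := ℂ) (1/2) * Dop k (Dop k (Dop k b)) = (Q' - Q) * a := by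
  have h := (dopDerivation k).gauge_equations_reduce C_half_mul_two Q Q' a b c d
  rw [coe_dopDerivation] at h
  exact h e1 e2 e3 e4
end

section
/- Let m = ord₀ Q > 0 and suppose two companion systems with potentials Q, Q' (both of Poincaré rank k) are formally gauge equivalent by an invertible formal transformation. Then ord₀(Q'−Q) ≥ min{k+m, 3k+1}; if moreover the transformation is tangent to identity then ord₀(Q'−Q) ≥ min{k+m+1, 3k+1}. -/
open PowerSeries

theorem Derivation.map_two_mul {R A : Type*} [CommRing R] [CommRing A] [Algebra R A]
    (D : Derivation R A A) (x : A) : D (2 * x) = 2 * D x := by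
  have h2 : D (2 : A) = 0 := by exact_mod_cast D.map_natCast 2
  simp [Derivation.leibniz, h2]

theorem gauge_identity {R A : Type*} [CommRing R] [CommRing A] [Algebra R A]
    (D : Derivation R A A) {Q Q' a b c d : A}
    (e1 : D b = -2 * d) (e2 : D (a + d) = c) (e3 : D (a - d) = -c + (Q' - Q) * b)
    (e4 : D (Q * b + c) = (Q' + Q) * d + (Q' - Q) * a) :
    (Q' - Q) * (2 * a) = 2 * (D Q * b) + 2 * (2 * Q + (Q' - Q)) * D b
      + D (Q' - Q) * b - D (D (D b)) := by
  rw [map_add] at e2 e4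
  rw [map_sub] at e3
  rw [D.leibniz, smul_eq_mul, smul_eq_mul] at e4
  have hDa : 2 * D a = (Q' - Q) * b := by linear_combination e2 + e3
  have hD2a : 2 * D (D a) = D (Q' - Q) * b + (Q' - Q) * D b := by
    have h := congrArg D hDa
    rw [D.map_two_mul, D.leibniz, smul_eq_mul, smul_eq_mul] at h
    linear_combination h
  have hD3b : D (D (D b)) = -2 * D (D d) := by
    have h := congrArg (D ∘ D) e1
    simp only [Function.comp_apply, neg_mul, map_neg, D.map_two_mul] at h
    linear_combination h
  rw [← e2, map_add] at e4
  linear_combination -2 * e4 + hD2a + hD3b - (Q' + Q) * e1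

theorem Dop_eq_smul_derivative (k : ℕ) : Dop k = ⇑((X : ℂ⟦X⟧) ^ (k + 1) • derivative ℂ) :=
  rfl

theorem X_pow_pred_dvd_derivative {R : Type*} [CommSemiring R] {j : ℕ} {f : R⟦X⟧}
    (h : X ^ j ∣ f) : X ^ (j - 1) ∣ derivative R f := by
  rw [X_pow_dvd_iff] at h ⊢
  intro i hi
  rw [coeff_derivative, h (i + 1) (by omega), zero_mul]

theorem X_pow_dvd_Dop {k j : ℕ} {f : ℂ⟦X⟧} (h : X ^ j ∣ f) :
    X ^ (k + 1 + (j - 1)) ∣ Dop k f := by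
  rw [pow_add]
  exact mul_dvd_mul_left _ (X_pow_pred_dvd_derivative h)

section Bootstrap

variable {k m t : ℕ} {Q R u b : ℂ⟦X⟧}

theorem X_pow_succ_dvd_of_identity {j : ℕ} (hQ : X ^ m ∣ Q) (hb : X ^ t ∣ b)
    (hu : IsUnit u)
    (H : R * u = 2 * (Dop k Q * b) + 2 * (2 * Q + R) * Dop k b + Dop k R * b
      - Dop k (Dop k (Dop k b)))
    (hj : j < min (k + m + t) (3 * k + 1)) (hR : X ^ j ∣ R) :
    X ^ (j + 1) ∣ R := by
  have dvd_mul {i l : ℕ} {f g : ℂ⟦X⟧} (hf : X ^ i ∣ f) (hg : X ^ l ∣ g) (hil : j + 1 ≤ i + l) :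
      X ^ (j + 1) ∣ f * g :=
    (pow_dvd_pow _ hil).trans (pow_add (X : ℂ⟦X⟧) i l ▸ mul_dvd_mul hf hg)
  have hQR : X ^ min m j ∣ 2 * Q + R :=
    dvd_add ((pow_dvd_pow X (min_le_left m j)).trans (dvd_mul_of_dvd_right hQ 2))
      ((pow_dvd_pow X (min_le_right m j)).trans hR)
  have hD3b : X ^ (j + 1) ∣ Dop k (Dop k (Dop k b)) :=
    (pow_dvd_pow X (by omega)).trans (X_pow_dvd_Dop (X_pow_dvd_Dop (X_pow_dvd_Dop hb)))
  rw [← hu.dvd_mul_right, H]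
  refine dvd_sub (dvd_add (dvd_add ?_ ?_) ?_) hD3b
  · exact dvd_mul_of_dvd_right (dvd_mul (X_pow_dvd_Dop hQ) hb (by omega)) 2
  · rw [mul_assoc]
    exact dvd_mul_of_dvd_right (dvd_mul hQR (X_pow_dvd_Dop hb) (by omega)) 2
  · exact dvd_mul (X_pow_dvd_Dop hR) hb (by omega)

theorem X_pow_min_dvd_of_identity (hQ : X ^ m ∣ Q) (hb : X ^ t ∣ b)
    (hu : IsUnit u)
    (H : R * u = 2 * (Dop k Q * b) + 2 * (2 * Q + R) * Dop k b + Dop k R * b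
      - Dop k (Dop k (Dop k b))) :
    X ^ min (k + m + t) (3 * k + 1) ∣ R := by
  suffices ∀ j ≤ min (k + m + t) (3 * k + 1), X ^ j ∣ R from this _ le_rfl
  intro j hj
  induction j with
  | zero => exact one_dvd R
  | succ j ih => exact X_pow_succ_dvd_of_identity hQ hb hu H hj (ih (by omega))

end Bootstrap

theorem stmt_9_general (k m : ℕ) (Q Q' a b c d : PowerSeries ℂ)
    (hord : Q.order = m)
    (e1 : Dop k b = -2 * d)
    (e2 : Dop k (a + d) = c)
    (e3 : Dop k (a - d) = -c + (Q' - Q) * b)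
    (e4 : Dop k (Q * b + c) = (Q' + Q) * d + (Q' - Q) * a) :
    (PowerSeries.constantCoeff a ≠ 0 →
       ((min (k + m) (3 * k + 1) : ℕ) : ℕ∞) ≤ (Q' - Q).order) ∧
    (PowerSeries.constantCoeff a = 1 → PowerSeries.constantCoeff b = 0 →
       ((min (k + m + 1) (3 * k + 1) : ℕ) : ℕ∞) ≤ (Q' - Q).order) := by
  rw [Dop_eq_smul_derivative] at e1 e2 e3 e4
  have H := gauge_identity _ e1 e2 e3 e4
  rw [← Dop_eq_smul_derivative] at H
  have hQ : X ^ m ∣ Q :=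
    X_pow_dvd_iff.mpr fun i hi => coeff_of_lt_order i (by rw [hord]; exact_mod_cast hi)
  have hu (ha : constantCoeff a ≠ 0) : IsUnit (2 * a) :=
    isUnit_iff_constantCoeff.mpr (by simpa [map_ofNat] using ha)
  refine ⟨fun ha => ?_, fun ha hb => ?_⟩
  · exact nat_le_order _ _ (X_pow_dvd_iff.mp
      (X_pow_min_dvd_of_identity (t := 0) hQ (one_dvd b) (hu ha) H))
  · have hXb : X ^ 1 ∣ b := by simpa using X_dvd_iff.mpr hb
    exact nat_le_order _ _ (X_pow_dvd_iff.mp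
      (X_pow_min_dvd_of_identity hQ hXb (hu (by simp [ha])) H))

/-- if `ord₀ Q = m > 0` and two companion systems with potentials
`Q, Q'` are formally gauge equivalent (the transformation `T = aI + b[[0,1],[Q,0]]
+ c[[0,0],[1,0]] + d[[1,0],[0,−1]]` satisfying the four conjugation equations being
invertible, i.e. `a(0) ≠ 0`), then `ord₀(Q'−Q) ≥ min{k+m, 3k+1}`; if moreover the
transformation is tangent to identity (`a(0)=1`, `b(0)=0`) then
`ord₀(Q'−Q) ≥ min{k+m+1, 3k+1}`. -/
theorem stmt_9 (k m : ℕ) (hm : 0 < m) (Q Q' a b c d : PowerSeries ℂ)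
    (hord : Q.order = m)
    (e1 : Dop k b = -2 * d)
    (e2 : Dop k (a + d) = c)
    (e3 : Dop k (a - d) = -c + (Q' - Q) * b)
    (e4 : Dop k (Q * b + c) = (Q' + Q) * d + (Q' - Q) * a) :
    (PowerSeries.constantCoeff a ≠ 0 →
       ((min (k + m) (3 * k + 1) : ℕ) : ℕ∞) ≤ (Q' - Q).order) ∧
    (PowerSeries.constantCoeff a = 1 → PowerSeries.constantCoeff b = 0 →
       ((min (k + m + 1) (3 * k + 1) : ℕ) : ℕ∞) ≤ (Q' - Q).order) :=
  stmt_9_general k m Q Q' a b c d hord e1 e2 e3 e4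
end

section
/- Let ĥ(x) be a formal power series and X = x^{k+1}∂_x + y₂∂_{y₁} + Q(x)y₁∂_{y₂} the vector field of the companion system. The vector field Ŷ₂ = ĥ·x^{k+1}∂_x + (1/2)(x^{k+1}ĥ')·(y₁∂_{y₁} − y₂∂_{y₂}) + (1/2)((x^{k+1}d/dx)²ĥ)·y₁∂_{y₂} satisfies [X, Ŷ₂] = α(x)·X with α = x^{k+1}ĥ' if and only if ĥ satisfies the third-order linear equation (x^{k+1}d/dx)³ĥ − 4Q·(x^{k+1}d/dx)ĥ − 2ĥ·(x^{k+1}d/dx)Q = 0. -/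
/-- The Lie bracket of vector fields on `ℂ³`, viewed as maps `ℂ³ → ℂ³`. -/
noncomputable def lieB (F G : (ℂ × ℂ × ℂ) → (ℂ × ℂ × ℂ)) : (ℂ × ℂ × ℂ) → (ℂ × ℂ × ℂ) :=
  fun p => fderiv ℂ G p (F p) - fderiv ℂ F p (G p)

/-!
`X` and `Ŷ₂` are both of the form `f(x)∂ₓ + A(x)y·∂_y` with `A` a `2 × 2` matrix, and such fields are
closed under the bracket. Computing `[X, Ŷ₂] - (Dh)X` with `D = x^{k+1} d/dx`, every coefficient
cancels identically except that of `y₁∂_{y₂}`, which is half of `D³h - 4Q·Dh - 2h·DQ`.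
-/

section FiberLinear

variable {𝕜 : Type*} [NontriviallyNormedField 𝕜]

def fiberLinearField (f a b c d : 𝕜 → 𝕜) (q : 𝕜 × 𝕜 × 𝕜) : 𝕜 × 𝕜 × 𝕜 :=
  (f q.1, a q.1 * q.2.1 + b q.1 * q.2.2, c q.1 * q.2.1 + d q.1 * q.2.2)

open ContinuousLinearMap in
theorem fderiv_fiberLinearField_apply {f a b c d : 𝕜 → 𝕜} {f' a' b' c' d' : 𝕜}
    {p : 𝕜 × 𝕜 × 𝕜} (hf : HasDerivAt f f' p.1) (ha : HasDerivAt a a' p.1)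
    (hb : HasDerivAt b b' p.1) (hc : HasDerivAt c c' p.1) (hd : HasDerivAt d d' p.1)
    (v : 𝕜 × 𝕜 × 𝕜) :
    fderiv 𝕜 (fiberLinearField f a b c d) p v =
      (f' * v.1,
       (a' * p.2.1 + b' * p.2.2) * v.1 + a p.1 * v.2.1 + b p.1 * v.2.2,
       (c' * p.2.1 + d' * p.2.2) * v.1 + c p.1 * v.2.1 + d p.1 * v.2.2) := by
  have hx : HasFDerivAt (fun q : 𝕜 × 𝕜 × 𝕜 => q.1) (fst 𝕜 𝕜 (𝕜 × 𝕜)) p := hasFDerivAt_fst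
  have hy₁ : HasFDerivAt (fun q : 𝕜 × 𝕜 × 𝕜 => q.2.1)
      ((fst 𝕜 𝕜 𝕜).comp (snd 𝕜 𝕜 (𝕜 × 𝕜))) p := hasFDerivAt_fst.comp p hasFDerivAt_snd
  have hy₂ : HasFDerivAt (fun q : 𝕜 × 𝕜 × 𝕜 => q.2.2)
      ((snd 𝕜 𝕜 𝕜).comp (snd 𝕜 𝕜 (𝕜 × 𝕜))) p := hasFDerivAt_snd.comp p hasFDerivAt_snd
  have H : HasFDerivAt (fiberLinearField f a b c d) _ p := ((hf.comp_hasFDerivAt p hx).prodMk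
    ((((ha.comp_hasFDerivAt p hx).mul hy₁).add ((hb.comp_hasFDerivAt p hx).mul hy₂)).prodMk
     (((hc.comp_hasFDerivAt p hx).mul hy₁).add ((hd.comp_hasFDerivAt p hx).mul hy₂))))
  rw [H.fderiv]
  simp only [prod_apply, add_apply, smul_apply, coe_comp, Function.comp_apply,
    coe_fst', coe_snd', smul_eq_mul, Prod.mk.injEq]
  exact ⟨trivial, by ring, by ring⟩

end FiberLinear

/-- Fibre-linear fields form a Lie algebra: the bracket of `f∂ₓ + A(x)y·∂_y` and `g∂ₓ + B(x)y·∂_y`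
is `(f g' - g f')∂ₓ + (f B' - g A' + BA - AB)y·∂_y`. -/
theorem lieB_fiberLinearField {f a₁ b₁ c₁ d₁ g a₂ b₂ c₂ d₂ : ℂ → ℂ}
    {f' a₁' b₁' c₁' d₁' g' a₂' b₂' c₂' d₂' x y₁ y₂ : ℂ}
    (hf : HasDerivAt f f' x) (ha₁ : HasDerivAt a₁ a₁' x) (hb₁ : HasDerivAt b₁ b₁' x)
    (hc₁ : HasDerivAt c₁ c₁' x) (hd₁ : HasDerivAt d₁ d₁' x)
    (hg : HasDerivAt g g' x) (ha₂ : HasDerivAt a₂ a₂' x) (hb₂ : HasDerivAt b₂ b₂' x)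
    (hc₂ : HasDerivAt c₂ c₂' x) (hd₂ : HasDerivAt d₂ d₂' x) :
    lieB (fiberLinearField f a₁ b₁ c₁ d₁) (fiberLinearField g a₂ b₂ c₂ d₂) (x, y₁, y₂) =
      (f x * g' - g x * f',
       (f x * a₂' - g x * a₁' + b₂ x * c₁ x - b₁ x * c₂ x) * y₁
         + (f x * b₂' - g x * b₁' + a₂ x * b₁ x + b₂ x * d₁ x - a₁ x * b₂ x - b₁ x * d₂ x) * y₂,
       (f x * c₂' - g x * c₁' + c₂ x * a₁ x + d₂ x * c₁ x - c₁ x * a₂ x - d₁ x * c₂ x) * y₁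
         + (f x * d₂' - g x * d₁' + c₂ x * b₁ x - c₁ x * b₂ x) * y₂) := by
  rw [lieB, fderiv_fiberLinearField_apply hg ha₂ hb₂ hc₂ hd₂,
    fderiv_fiberLinearField_apply hf ha₁ hb₁ hc₁ hd₁]
  simp only [fiberLinearField, Prod.mk_sub_mk, Prod.mk.injEq]
  exact ⟨by ring, by ring, by ring⟩

noncomputable def xDeriv (k : ℕ) (u : ℂ → ℂ) : ℂ → ℂ := fun x => x ^ (k + 1) * deriv u x

theorem AnalyticOnNhd.xDeriv {u : ℂ → ℂ} {s : Set ℂ} (hu : AnalyticOnNhd ℂ u s) (k : ℕ) :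
    AnalyticOnNhd ℂ (xDeriv k u) s :=
  fun x hx => (analyticAt_id.pow _).mul (hu.deriv x hx)

noncomputable def companionField (k : ℕ) (Q : ℂ → ℂ) : ℂ × ℂ × ℂ → ℂ × ℂ × ℂ :=
  fiberLinearField (· ^ (k + 1)) 0 1 Q 0

noncomputable def symmetryField (k : ℕ) (h : ℂ → ℂ) : ℂ × ℂ × ℂ → ℂ × ℂ × ℂ :=
  fiberLinearField (fun x => h x * x ^ (k + 1)) (fun x => xDeriv k h x / 2) 0
    (fun x => xDeriv k (xDeriv k h) x / 2) (fun x => -(xDeriv k h x / 2))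

noncomputable def symmetryDefect (k : ℕ) (Q h : ℂ → ℂ) (x : ℂ) : ℂ :=
  xDeriv k (xDeriv k (xDeriv k h)) x - 4 * Q x * xDeriv k h x - 2 * h x * xDeriv k Q x

theorem lieB_companionField_symmetryField {k : ℕ} {Q h : ℂ → ℂ} {p : ℂ × ℂ × ℂ}
    (hQ : DifferentiableAt ℂ Q p.1) (hh : DifferentiableAt ℂ h p.1)
    (hDh : DifferentiableAt ℂ (xDeriv k h) p.1)
    (hD2h : DifferentiableAt ℂ (xDeriv k (xDeriv k h)) p.1) :
    lieB (companionField k Q) (symmetryField k h) p =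
      xDeriv k h p.1 • companionField k Q p + (0, 0, symmetryDefect k Q h p.1 / 2 * p.2.1) := by
  obtain ⟨x, y₁, y₂⟩ := p
  have hpow := hasDerivAt_pow (k + 1) x
  have h0 : HasDerivAt (0 : ℂ → ℂ) 0 x := hasDerivAt_const _ _
  have h1 : HasDerivAt (1 : ℂ → ℂ) 0 x := hasDerivAt_const _ _
  rw [companionField, symmetryField, lieB_fiberLinearField hpow h0 h1 hQ.hasDerivAt h0
    (hh.hasDerivAt.fun_mul hpow) (hDh.hasDerivAt.div_const 2) h0 (hD2h.hasDerivAt.div_const 2)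
    (hDh.hasDerivAt.div_const 2).fun_neg]
  unfold symmetryDefect xDeriv
  simp only [fiberLinearField, Pi.zero_apply, Pi.one_apply,
    Prod.smul_mk, Prod.mk_add_mk, smul_eq_mul, Prod.mk.injEq]
  exact ⟨by ring, by ring, by ring⟩

/-- with `X = x^{k+1}∂ₓ + y₂∂_{y₁} + Q y₁∂_{y₂}` and
`Y = h·x^{k+1}∂ₓ + (1/2)(x^{k+1}h')(y₁∂_{y₁} − y₂∂_{y₂})
+ (1/2)((x^{k+1}d/dx)²h)·y₁∂_{y₂}`, one has `[X,Y] = (x^{k+1}h')·X` if and only if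
`h` solves `(x^{k+1}d/dx)³h − 4Q(x^{k+1}d/dx)h − 2h(x^{k+1}d/dx)Q = 0`. -/
theorem stmt_12 (k : ℕ) (Q h : ℂ → ℂ)
    (hQ : ∀ x, AnalyticAt ℂ Q x) (hh : ∀ x, AnalyticAt ℂ h x)
    (X Y : (ℂ × ℂ × ℂ) → (ℂ × ℂ × ℂ))
    (hX : ∀ p, X p = (p.1 ^ (k+1), p.2.2, Q p.1 * p.2.1))
    (hY : ∀ p, Y p = (h p.1 * p.1 ^ (k+1),
        (1/2) * (p.1 ^ (k+1) * deriv h p.1) * p.2.1,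
        -(1/2) * (p.1 ^ (k+1) * deriv h p.1) * p.2.2
          + (1/2) * (p.1 ^ (k+1)
              * deriv (fun t => t ^ (k+1) * deriv h t) p.1) * p.2.1)) :
    (∀ p : ℂ × ℂ × ℂ, lieB X Y p = (p.1 ^ (k+1) * deriv h p.1) • X p) ↔
    (∀ x : ℂ,
      x ^ (k+1) * deriv (fun t => t ^ (k+1)
          * deriv (fun u => u ^ (k+1) * deriv h u) t) x
        - 4 * Q x * (x ^ (k+1) * deriv h x)
        - 2 * h x * (x ^ (k+1) * deriv Q x) = 0) := by
  obtain rfl : X = companionField k Q := funext fun p => by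
    simp [hX, companionField, fiberLinearField]
  obtain rfl : Y = symmetryField k h := funext fun p => by
    unfold symmetryField xDeriv
    simp only [hY, fiberLinearField, Pi.zero_apply, Prod.mk.injEq]
    exact ⟨trivial, by ring, by ring⟩
  have hh' : AnalyticOnNhd ℂ h Set.univ := fun x _ => hh x
  have hbracket (p : ℂ × ℂ × ℂ) := lieB_companionField_symmetryField (hQ p.1).differentiableAt
    (hh p.1).differentiableAt ((hh'.xDeriv k) p.1 trivial).differentiableAt
    (((hh'.xDeriv k).xDeriv k) p.1 trivial).differentiableAt
  change (∀ p : ℂ × ℂ × ℂ, _ = xDeriv k h p.1 • _) ↔ ∀ x, symmetryDefect k Q h x = 0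
  simp only [hbracket, add_eq_left, Prod.mk_eq_zero, true_and, mul_eq_zero, div_eq_zero_iff,
    two_ne_zero, or_false]
  exact ⟨fun H x => by simpa using H (x, 1, 0), fun H p => Or.inl (H p.1)⟩
end

section
/- Let P(x,ε) = ∏ⱼ Pⱼ(x,ε)^{lⱼ} be the factorization of a monic Weierstrass polynomial in x into irreducible factors and p(x,ε) = ∏ⱼ Pⱼ(x,ε). Then p is the minimal monic polynomial divisor such that p·(∂P/∂x) is divisible by P; consequently, a flat connection ∇ = d − A(x,t,ε)dx/P − Σᵢ Cᵢ(x,t,ε)dtᵢ/P with A, Cᵢ analytic has P·dΩ analytic (for Ω the full connection form) if and only if each Cᵢ is divisible by p. -/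
open Polynomial Finset

section Aux

variable {F : Type*} [Field F] [CharZero F]

lemma aux_not_dvd_deriv {q : Polynomial F} (hq : Irreducible q) :
    ¬ q ∣ derivative q := by
  have hpos : 0 < q.natDegree :=
    Polynomial.natDegree_pos_iff_degree_pos.mpr (Polynomial.degree_pos_of_irreducible hq)
  intro h
  have hd0 : derivative q ≠ 0 := fun h0 =>
    absurd (Polynomial.natDegree_eq_zero_of_derivative_eq_zero h0) hpos.ne'
  have h1 := Polynomial.natDegree_le_of_dvd h hd0
  have h2 := Polynomial.natDegree_derivative_lt hpos.ne'
  omega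

end Aux

/-- for `P = ∏ⱼ Pⱼ^{lⱼ}` with `Pⱼ` irreducible monic pairwise coprime
and `p = ∏ⱼ Pⱼ` the radical, `p` is the minimal monic polynomial with `P ∣ p·P'`, and
for any polynomial `C`, `P ∣ C·P'` iff `p ∣ C` (equivalently, the 1-form component
`(∂C/∂x − C·P'/P)` is analytic iff `p ∣ C`). -/
theorem stmt_13 {F : Type*} [Field F] [CharZero F] (n : ℕ)
    (Pj : Fin n → Polynomial F) (l : Fin n → ℕ)
    (hirr : ∀ j, Irreducible (Pj j)) (hmon : ∀ j, (Pj j).Monic)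
    (hl : ∀ j, 1 ≤ l j)
    (hcop : ∀ i j, i ≠ j → IsCoprime (Pj i) (Pj j))
    (P p : Polynomial F)
    (hP : P = ∏ j, Pj j ^ l j) (hp : p = ∏ j, Pj j) :
    (P ∣ p * Polynomial.derivative P) ∧
    (∀ q : Polynomial F, q.Monic → P ∣ q * Polynomial.derivative P → p ∣ q) ∧
    (∀ C : Polynomial F, P ∣ C * Polynomial.derivative P ↔ p ∣ C) := by
  have hprime : ∀ j, Prime (Pj j) := fun j => (hirr j).prime
  have hdecomp : ∀ j : Fin n,
      derivative P = Pj j ^ (l j - 1) * ((l j : Polynomial F) * derivative (Pj j) *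
        (∏ k ∈ Finset.univ.erase j, Pj k ^ l k) +
          Pj j * derivative (∏ k ∈ Finset.univ.erase j, Pj k ^ l k)) := by
    intro j
    set Q := ∏ k ∈ Finset.univ.erase j, Pj k ^ l k with hQ
    have hPj : P = Pj j ^ l j * Q := by
      rw [hP, hQ]
      exact (Finset.mul_prod_erase _ _ (Finset.mem_univ j)).symm
    have h1 : l j - 1 + 1 = l j := Nat.succ_pred_eq_of_pos (hl j)
    have e1 : Pj j ^ l j = Pj j ^ (l j - 1) * Pj j := by rw [← pow_succ, h1]
    rw [hPj, derivative_mul, derivative_pow, e1, Polynomial.C_eq_natCast]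
    ring
  -- the key iff
  have key : ∀ C : Polynomial F, P ∣ C * Polynomial.derivative P ↔ p ∣ C := by
    intro C
    constructor
    · intro hdvd
      have hjC : ∀ j, Pj j ∣ C := by
        intro j
        set Q := ∏ k ∈ Finset.univ.erase j, Pj k ^ l k with hQ
        set T := (l j : Polynomial F) * derivative (Pj j) * Q + Pj j * derivative Q with hT
        have hS : derivative P = Pj j ^ (l j - 1) * T := hdecomp j
        have hpow : Pj j ^ l j ∣ C * derivative P := by
          refine dvd_trans ?_ hdvd
          rw [hP]
          exact Finset.dvd_prod_of_mem _ (Finset.mem_univ j)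
        have h1 : l j - 1 + 1 = l j := Nat.succ_pred_eq_of_pos (hl j)
        have e1 : Pj j ^ (l j - 1) * Pj j = Pj j ^ l j := by rw [← pow_succ, h1]
        have e2 : C * derivative P = Pj j ^ (l j - 1) * (C * T) := by rw [hS]; ring
        rw [← e1, e2] at hpow
        have hne : Pj j ^ (l j - 1) ≠ 0 := pow_ne_zero _ (hprime j).1
        have hdiv : Pj j ∣ C * T := (mul_dvd_mul_iff_left hne).mp hpow
        have h3 : Pj j ∣ C * (Pj j * derivative Q) := ⟨C * derivative Q, by ring⟩
        have h2 : Pj j ∣ C * ((l j : Polynomial F) * derivative (Pj j) * Q) := by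
          have := dvd_sub hdiv h3
          convert this using 1
          rw [hT]; ring
        rcases (hprime j).2.2 _ _ h2 with hC | hrest
        · exact hC
        rcases (hprime j).2.2 _ _ hrest with hrest2 | hQd
        · rcases (hprime j).2.2 _ _ hrest2 with hl' | hd
          · exfalso
            have hu : IsUnit ((l j : Polynomial F)) := by
              rw [← Polynomial.C_eq_natCast]
              exact Polynomial.isUnit_C.mpr (isUnit_iff_ne_zero.mpr
                (Nat.cast_ne_zero.mpr (by omega)))
            exact (hprime j).2.1 (isUnit_of_dvd_unit hl' hu)
          · exact absurd hd (aux_not_dvd_deriv (hirr j))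
        · exfalso
          obtain ⟨k, hk, hdk⟩ := (Prime.dvd_finset_prod_iff (hprime j) _).mp hQd
          have hkj : j ≠ k := (Finset.ne_of_mem_erase hk).symm
          have hdvdk : Pj j ∣ Pj k := (hprime j).dvd_of_dvd_pow hdk
          exact (hprime j).2.1 ((hcop j k hkj).isUnit_of_dvd' dvd_rfl hdvdk)
      rw [hp]
      exact Finset.prod_dvd_of_coprime
        (fun i _ k _ hik => hcop i k hik) (fun i _ => hjC i)
    · intro hpC
      have hPpP' : P ∣ p * derivative P := by
        have hj : ∀ j : Fin n, Pj j ^ l j ∣ p * derivative P := by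
          intro j
          set Q := ∏ k ∈ Finset.univ.erase j, Pj k ^ l k with hQ
          have hS := hdecomp j
          have hpj : p = Pj j * ∏ k ∈ Finset.univ.erase j, Pj k := by
            rw [hp]
            exact (Finset.mul_prod_erase _ _ (Finset.mem_univ j)).symm
          have h1 : l j - 1 + 1 = l j := Nat.succ_pred_eq_of_pos (hl j)
          have e1 : Pj j ^ l j = Pj j ^ (l j - 1) * Pj j := by rw [← pow_succ, h1]
          refine ⟨(∏ k ∈ Finset.univ.erase j, Pj k) *
            ((l j : Polynomial F) * derivative (Pj j) * Q + Pj j * derivative Q), ?_⟩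
          rw [hpj, hS, e1]
          ring
        nth_rewrite 1 [hP]
        exact Finset.prod_dvd_of_coprime
          (fun i _ k _ hik => (hcop i k hik).pow) (fun j _ => hj j)
      exact hPpP'.trans (mul_dvd_mul_right hpC (derivative P))
  refine ⟨(key p).mpr dvd_rfl, fun q _ h => (key q).mp h, key⟩
end

section
/- Let P(x,ε) be a monic Weierstrass polynomial of degree k+1 in x with P(x,0) = x^{k+1}, and Q(x,ε) analytic with Q(0,0) contributing order m in x at ε=0. For the Weierstrass decomposition Q = q·(U + P·f) with q, U polynomials in x of degrees m and k respectively, u(0,0)≠0, and f analytic, the polynomial Q̃ := q·U is the unique polynomial in x of degree ≤ k+m with Q/Q̃ ≡ 1 modulo P·ℂ{x,ε} (i.e. Q − Q̃ ∈ Q̃·P·ℂ{x,ε} up to units), equivalently Q̃ is the unique such polynomial with Q ≡ Q̃·(1 + P·g) for some analytic g. -/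
/-!
Existence: `U` is a unit of `A⟦X⟧`, so `U + P f = U (1 + P f U⁻¹)`.

Uniqueness: if `q U (1 + P g₀) = R (1 + P g)`, then `1 + P g` is a unit, and dividing by it shows
`R - q U ∈ P q U · A⟦X⟧`. Now `P q` is a distinguished polynomial of degree
`k + m + 1 > deg (R - q U)`, and by uniqueness of Weierstrass division the only polynomial of
smaller degree divisible by it in `A⟦X⟧` is `0`. This needs `A = ℂ⟦ε⟧` to be Hausdorff for the ideal `ε A`, which is Krull's
intersection theorem for the Noetherian local ring `A`.
-/

open PowerSeries

section

variable {A : Type*} [CommRing A]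

theorem IsUnit.exists_add_mul_eq_mul_one_add_mul {u : A} (hu : IsUnit u) (p f : A) :
    ∃ g, u + p * f = u * (1 + p * g) := by
  obtain ⟨v, rfl⟩ := hu
  exact ⟨f * ↑v⁻¹, by linear_combination (-(p * f)) * v.mul_inv⟩

theorem mul_dvd_sub_of_mul_one_add_mul_eq {p a b g₀ g : A} (hg : IsUnit (1 + p * g))
    (h : a * (1 + p * g₀) = b * (1 + p * g)) : p * a ∣ b - a := by
  obtain ⟨v, hv⟩ := hg
  refine ⟨(g₀ - g) * ↑v⁻¹, ?_⟩
  linear_combination (-(b - a)) * v.mul_inv - (↑v⁻¹ : A) * h + (↑v⁻¹ : A) * (b - a) * hv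

theorem PowerSeries.isUnit_one_add_mul_of_constantCoeff_mem_jacobson {p : A⟦X⟧}
    (hp : constantCoeff p ∈ (⊥ : Ideal A).jacobson) (g : A⟦X⟧) : IsUnit (1 + p * g) := by
  rw [isUnit_iff_constantCoeff, map_add, map_mul, map_one, add_comm]
  exact Ideal.mem_jacobson_bot.mp hp _

namespace Polynomial

theorem isDistinguishedAt_ker_of_map_eq_X_pow {B : Type*} [Semiring B] (φ : A →+* B) {p : A[X]}
    (hp : p.Monic) (h : p.map φ = X ^ p.natDegree) : p.IsDistinguishedAt (RingHom.ker φ) :=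
  ⟨⟨fun {n} hn ↦ by rw [RingHom.mem_ker, ← coeff_map, h, coeff_X_pow, if_neg hn.ne]⟩, hp⟩

theorem IsDistinguishedAt.eq_zero_of_coe_dvd {I : Ideal A} [IsHausdorff I A] {w r : A[X]}
    (hw : w.IsDistinguishedAt I) (hr : r.degree < w.natDegree) (hdvd : (w : A⟦X⟧) ∣ r) :
    r = 0 := by
  rcases eq_or_ne I ⊤ with rfl | hI
  · have := ‹IsHausdorff ⊤ A›.subsingleton
    exact Subsingleton.elim _ _
  obtain ⟨t, ht⟩ := hdvd
  have horder : (((w : A⟦X⟧).map (Ideal.Quotient.mk I)).order.toNat) = w.natDegree := by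
    rw [← hw.coe_natDegree_eq_order_map (w : A⟦X⟧) 1 (by simpa [← Ideal.ne_top_iff_one] using hI)
      (mul_one _).symm, ENat.toNat_natCast]
  exact ((hw.isWeierstrassDivisorAt hI).eq_zero_of_mul_eq (horder ▸ hr) ht.symm).2

theorem eq_of_mul_one_add_mul_eq {I : Ideal A} [IsHausdorff I A] (hI : I ≤ (⊥ : Ideal A).jacobson)
    {P q U R : A[X]} (hP : P.IsDistinguishedAt I) (hq : q.IsDistinguishedAt I)
    (hU : U.natDegree < P.natDegree) (hR : R.natDegree < P.natDegree + q.natDegree)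
    {g₀ g : A⟦X⟧} (h : ((q * U : A[X]) : A⟦X⟧) * (1 + P * g₀) = R * (1 + P * g)) :
    R = q * U := by
  have hunit : IsUnit (1 + (P : A⟦X⟧) * g) :=
    isUnit_one_add_mul_of_constantCoeff_mem_jacobson
      (hI (by rw [constantCoeff_coe]; exact hP.mem (by omega))) g
  have hdvd : ((P * q : A[X]) : A⟦X⟧) ∣ ((R - q * U : A[X]) : A⟦X⟧) := by
    rw [coe_sub]
    refine dvd_trans ⟨U, ?_⟩ (mul_dvd_sub_of_mul_one_add_mul_eq hunit h)
    push_cast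
    ring
  have hdeg : (R - q * U).degree < (P * q).natDegree := by
    have : (R - q * U).natDegree < P.natDegree + q.natDegree :=
      (natDegree_sub_le _ _).trans_lt (max_lt hR (natDegree_mul_le.trans_lt (by omega)))
    rw [hP.monic.natDegree_mul hq.monic]
    exact degree_le_natDegree.trans_lt (mod_cast this)
  exact sub_eq_zero.mp ((hP.mul hq).eq_zero_of_coe_dvd hdeg hdvd)

end Polynomial

end

/-- Weierstrass setup: `P` monic of degree `k+1` in `x` with
`P(x,0)=x^{k+1}`, `q` monic Weierstrass of degree `m`, `U` a polynomial of degree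
`≤ k` with `U(0,0) ≠ 0`, `f` analytic (formal), and `Q = q(U + Pf)`. Then
`Q̃ := q·U` is the unique polynomial in `x` of degree `≤ k+m` with
`Q ≡ Q̃·(1 + P·g)` for some (formal) `g`. Coefficients are formal power series in
the parameter `ε ∈ ℂˡ`. -/
theorem stmt_15 (lp k m : ℕ)
    (P q U : Polynomial (MvPowerSeries (Fin lp) ℂ))
    (f : PowerSeries (MvPowerSeries (Fin lp) ℂ))
    (hPmon : P.Monic) (hPdeg : P.natDegree = k + 1)
    (hPw : P.map ((MvPowerSeries.constantCoeff : MvPowerSeries (Fin lp) ℂ →+* ℂ)) = Polynomial.X ^ (k+1))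
    (hqmon : q.Monic) (hqdeg : q.natDegree = m)
    (hqw : q.map ((MvPowerSeries.constantCoeff : MvPowerSeries (Fin lp) ℂ →+* ℂ)) = Polynomial.X ^ m)
    (hUdeg : U.natDegree ≤ k)
    (hU0 : (MvPowerSeries.constantCoeff : MvPowerSeries (Fin lp) ℂ →+* ℂ) (U.coeff 0) ≠ 0) :
    (∃ g : PowerSeries (MvPowerSeries (Fin lp) ℂ),
        (q : PowerSeries (MvPowerSeries (Fin lp) ℂ))
            * ((U : PowerSeries (MvPowerSeries (Fin lp) ℂ))
              + (P : PowerSeries (MvPowerSeries (Fin lp) ℂ)) * f)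
          = ((q * U : Polynomial (MvPowerSeries (Fin lp) ℂ))
              : PowerSeries (MvPowerSeries (Fin lp) ℂ))
            * (1 + (P : PowerSeries (MvPowerSeries (Fin lp) ℂ)) * g)) ∧
    (∀ R : Polynomial (MvPowerSeries (Fin lp) ℂ), R.natDegree ≤ k + m →
      ∀ g : PowerSeries (MvPowerSeries (Fin lp) ℂ),
        (q : PowerSeries (MvPowerSeries (Fin lp) ℂ))
            * ((U : PowerSeries (MvPowerSeries (Fin lp) ℂ))
              + (P : PowerSeries (MvPowerSeries (Fin lp) ℂ)) * f)
          = (R : PowerSeries (MvPowerSeries (Fin lp) ℂ))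
            * (1 + (P : PowerSeries (MvPowerSeries (Fin lp) ℂ)) * g) →
        R = q * U) := by
  set I := RingHom.ker (MvPowerSeries.constantCoeff : MvPowerSeries (Fin lp) ℂ →+* ℂ)
  have hI : I ≤ (⊥ : Ideal _).jacobson :=
    (IsLocalRing.le_maximalIdeal (RingHom.ker_ne_top _)).trans
      (IsLocalRing.maximalIdeal_le_jacobson _)
  have : IsHausdorff I (MvPowerSeries (Fin lp) ℂ) := .of_le_jacobson _ _ hI
  have hP := Polynomial.isDistinguishedAt_ker_of_map_eq_X_pow _ hPmon (by rw [hPw, hPdeg])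
  have hq := Polynomial.isDistinguishedAt_ker_of_map_eq_X_pow _ hqmon (by rw [hqw, hqdeg])
  have hUunit : IsUnit (U : PowerSeries (MvPowerSeries (Fin lp) ℂ)) := by
    rw [isUnit_iff_constantCoeff, Polynomial.constantCoeff_coe,
      MvPowerSeries.isUnit_iff_constantCoeff]
    exact hU0.isUnit
  have hex : ∃ g, (q : PowerSeries (MvPowerSeries (Fin lp) ℂ)) * (U + P * f)
      = ((q * U : Polynomial _) : PowerSeries (MvPowerSeries (Fin lp) ℂ)) * (1 + P * g) := by
    obtain ⟨g, hg⟩ := hUunit.exists_add_mul_eq_mul_one_add_mul P f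
    exact ⟨g, by rw [hg, Polynomial.coe_mul, mul_assoc]⟩
  refine ⟨hex, fun R hR g h ↦ ?_⟩
  obtain ⟨g₀, hg₀⟩ := hex
  exact Polynomial.eq_of_mul_one_add_mul_eq hI hP hq (by omega) (by omega) (hg₀.symm.trans h)
end
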